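/- arXiv:2602.19581 — 7 statements merged into one kernel-verified Lean document; each statement's English description precedes it below -/
import Mathlib

section
/- Let T be a 2×2 complex matrix. If T is normaloid, i.e., the spectral radius of T equals the operator norm (with respect to the Euclidean norm on ℂ²) of T, then T is normal (T*T = TT*). Consequently, for 2×2 complex matrices, normality and normaloidness are equivalent. -/
/-!
Pick an eigenvalue `z` of maximal modulus, so `|z| = ‖T‖`, with eigenvector `v`.
Expanding `‖T* v - z̄ v‖²` and using `‖T* v‖ ≤ ‖T‖ ‖v‖` shows `T* v = z̄ v`, so `v` is a common
eigenvector of `T` and `T*`, and then both preserve the line `v⊥`. On each of the two lines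
`ℂ v` and `v⊥` the operators `T` and `T*` act as scalars, hence they commute.
-/

open ContinuousLinearMap Module Submodule

open scoped ComplexConjugate

theorem Submodule.apply_apply_comm_of_finrank_eq_one {K : Type*} {V : Type*} [Field K]
    [AddCommGroup V] [Module K V] {W : Submodule K V} (hW : finrank K W = 1)
    {f g : V →ₗ[K] V} (hf : ∀ x ∈ W, f x ∈ W) (hg : ∀ x ∈ W, g x ∈ W) {x : V} (hx : x ∈ W) :
    f (g x) = g (f x) := by
  obtain ⟨a, ha, -⟩ := (f.restrict hf).existsUnique_eq_smul_id_of_finrank_eq_one hW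
  obtain ⟨b, hb, -⟩ := (g.restrict hg).existsUnique_eq_smul_id_of_finrank_eq_one hW
  have hfx : f x = a • x := congrArg Subtype.val (LinearMap.congr_fun ha ⟨x, hx⟩)
  have hgx : g x = b • x := congrArg Subtype.val (LinearMap.congr_fun hb ⟨x, hx⟩)
  rw [hfx, hgx, map_smul, map_smul, hfx, hgx, smul_comm]

section

variable {𝕜 E : Type*} [RCLike 𝕜] [NormedAddCommGroup E] [InnerProductSpace 𝕜 E] [CompleteSpace E]

theorem ContinuousLinearMap.adjoint_apply_eq_conj_smul_of_norm_le {A : E →L[𝕜] E} {v : E} {z : 𝕜}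
    (hAv : A v = z • v) (hA : ‖A‖ ≤ ‖z‖) : adjoint A v = conj z • v := by
  have hinner : inner 𝕜 (adjoint A v) v = z * ‖v‖ ^ 2 := by
    rw [adjoint_inner_left, hAv, inner_smul_right, inner_self_eq_norm_sq_to_K]
  have hle : ‖adjoint A v‖ ≤ ‖z‖ * ‖v‖ := by
    calc ‖adjoint A v‖ ≤ ‖adjoint A‖ * ‖v‖ := le_opNorm _ _
      _ = ‖A‖ * ‖v‖ := by rw [LinearIsometryEquiv.norm_map]
      _ ≤ ‖z‖ * ‖v‖ := by gcongr
  rw [← sub_eq_zero, ← norm_le_zero_iff, ← sq_le_sq₀ (norm_nonneg _) le_rfl]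
  have hexpand := norm_sub_sq (𝕜 := 𝕜) (adjoint A v) (conj z • v)
  rw [inner_smul_right, hinner, ← mul_assoc, RCLike.conj_mul, norm_smul, RCLike.norm_conj,
    ← RCLike.ofReal_pow, ← RCLike.ofReal_pow, ← RCLike.ofReal_mul, RCLike.ofReal_re] at hexpand
  rw [hexpand]
  nlinarith [mul_self_le_mul_self (norm_nonneg _) hle]

theorem ContinuousLinearMap.apply_mem_orthogonal_singleton {A : E →L[𝕜] E} {v x : E} {c : 𝕜}
    (hv : adjoint A v = c • v) (hx : x ∈ (𝕜 ∙ v)ᗮ) : A x ∈ (𝕜 ∙ v)ᗮ := by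
  rw [mem_orthogonal_singleton_iff_inner_right] at hx ⊢
  rw [← adjoint_inner_left, hv, inner_smul_left, hx, mul_zero]

theorem ContinuousLinearMap.isStarNormal_of_adjoint_apply_eq_conj_smul (hE : finrank 𝕜 E = 2)
    {A : E →L[𝕜] E} {v : E} {z : 𝕜} (hv : v ≠ 0) (hAv : A v = z • v) (hA'v : adjoint A v = conj z • v) : IsStarNormal A := by
  have : Fact (finrank 𝕜 E = 1 + 1) := ⟨hE⟩
  set K := (𝕜 ∙ v)ᗮ
  have hK : finrank 𝕜 K = 1 := finrank_orthogonal_span_singleton hv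
  have hAK (x : E) (hx : x ∈ K) : A x ∈ K := apply_mem_orthogonal_singleton hA'v hx
  have hA'K (x : E) (hx : x ∈ K) : adjoint A x ∈ K :=
    apply_mem_orthogonal_singleton (by rwa [adjoint_adjoint]) hx
  refine ⟨ContinuousLinearMap.ext fun x ↦ ?_⟩
  have hx : x ∈ (𝕜 ∙ v) ⊔ K := by rw [sup_orthogonal_of_hasOrthogonalProjection]; trivial
  obtain ⟨u, hu, y, hy, rfl⟩ := mem_sup.mp hx
  obtain ⟨s, rfl⟩ := mem_span_singleton.mp hu
  have hy_comm := apply_apply_comm_of_finrank_eq_one hK (f := (adjoint A : E →ₗ[𝕜] E))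
    (g := (A : E →ₗ[𝕜] E)) hA'K hAK hy
  simp only [coe_coe] at hy_comm
  simp only [star_eq_adjoint, mul_apply_eq_comp, map_add, map_smul, hAv, hA'v, hy_comm, smul_smul,
    mul_comm z]

end

theorem ContinuousLinearMap.isStarNormal_of_spectralRadius_eq_nnnorm
    {E : Type*} [NormedAddCommGroup E] [InnerProductSpace ℂ E] [CompleteSpace E]
    (hE : finrank ℂ E = 2) {A : E →L[ℂ] E} (h : spectralRadius ℂ A = ‖A‖₊) : IsStarNormal A := by
  have : FiniteDimensional ℂ E := .of_finrank_eq_succ hE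
  have : Nontrivial E := nontrivial_of_finrank_eq_succ hE
  obtain ⟨z, hz, hzA⟩ := spectrum.exists_nnnorm_eq_spectralRadius A
  rw [spectrum_eq, ← Module.End.hasEigenvalue_iff_mem_spectrum] at hz
  obtain ⟨v, hv⟩ := hz.exists_hasEigenvector
  have hAv : A v = z • v := hv.apply_eq_smul
  have hnorm : ‖A‖ ≤ ‖z‖ := by
    rw [← coe_nnnorm, ← coe_nnnorm, ← ENNReal.coe_inj.mp (hzA.trans h)]
  exact isStarNormal_of_adjoint_apply_eq_conj_smul hE hv.2 hAv
    (adjoint_apply_eq_conj_smul_of_norm_le hAv hnorm)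

open Matrix

theorem stmt_1 (T : Matrix (Fin 2) (Fin 2) ℂ) :
    spectralRadius ℂ T = ‖Matrix.toEuclideanCLM (𝕜 := ℂ) (n := Fin 2) T‖₊ ↔
      Tᴴ * T = T * Tᴴ := by
  set A := Matrix.toEuclideanCLM (𝕜 := ℂ) (n := Fin 2) T
  have hrad : spectralRadius ℂ T = spectralRadius ℂ A := by
    rw [spectralRadius, spectralRadius, AlgEquiv.spectrum_eq]
  have hnormal : Tᴴ * T = T * Tᴴ ↔ IsStarNormal A := by
    rw [isStarNormal_iff, commute_iff_eq, ← Matrix.star_eq_conjTranspose, ← map_star, ← map_mul,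
      ← map_mul, EmbeddingLike.apply_eq_iff_eq]
  rw [hrad, hnormal]
  exact ⟨isStarNormal_of_spectralRadius_eq_nnnorm finrank_euclideanSpace_fin,
    fun _ ↦ IsStarNormal.spectralRadius_eq_nnnorm A⟩
end

section
/- Let H be a complex Hilbert space and T a bounded linear operator on H that is normaloid. If T^n = λ·I for some n ∈ ℕ, n ≥ 1, and some λ ∈ ℂ, then T is normal. Moreover, if T ≠ 0, then T = μ·W for some nonzero scalar μ ∈ ℂ and some unitary operator W on H. -/
/-!
Since `T` is normaloid, `‖T‖ ^ n = r(T) ^ n ≤ ‖T ^ n‖ ≤ ‖T‖ ^ n`, so `‖T‖ ^ n = |λ|`. If `T ≠ 0`,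
pick `μ` with `μ ^ n = λ`; then `W = μ⁻¹ • T` satisfies `W ^ n = 1` and `‖W‖ = 1`. A contraction
whose inverse `W ^ (n - 1)` is also a contraction is an isometry, and an invertible isometry of a
Hilbert space is unitary. Finally `T = μ • W` is normal, as a multiple of a unitary.
-/

open ContinuousLinearMap

variable {H : Type*} [NormedAddCommGroup H] [InnerProductSpace ℂ H] [CompleteSpace H]

/-- `|T| = (T^*T)^{1/2}`, via the continuous functional calculus. -/
noncomputable def opAbs (T : H →L[ℂ] H) : H →L[ℂ] H :=
  cfc Real.sqrt (adjoint T * T)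

/-- The real power `A^s` of a (positive) operator, via the continuous functional calculus. -/
noncomputable def opPow (A : H →L[ℂ] H) (s : ℝ) : H →L[ℂ] H :=
  cfc (fun x : ℝ => x ^ s) A

/-- `T` is absolute-`(p,r)`-paranormal if
`‖ |T|^p |T^*|^r x ‖^r ≥ ‖ |T^*|^r x ‖^(p+r)` for every unit vector `x`. -/
def AbsPRParanormal (p r : ℝ) (T : H →L[ℂ] H) : Prop :=
  ∀ x : H, ‖x‖ = 1 →
    ‖opPow (opAbs (adjoint T)) r x‖ ^ (p + r) ≤
      ‖opPow (opAbs T) p (opPow (opAbs (adjoint T)) r x)‖ ^ r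

theorem nnnorm_pow_eq_pow_of_spectralRadius_eq {𝕜 A : Type*} [NormedField 𝕜] [NormedRing A]
    [NormedAlgebra 𝕜 A] [CompleteSpace A] [NormOneClass A] {a : A}
    (ha : spectralRadius 𝕜 a = ‖a‖₊) {n : ℕ} (hn : n ≠ 0) :
    ‖a ^ n‖₊ = ‖a‖₊ ^ n := by
  obtain ⟨k, rfl⟩ := Nat.exists_eq_succ_of_ne_zero hn
  refine le_antisymm (nnnorm_pow_le' a k.succ_pos) ?_
  have gelfand := spectrum.spectralRadius_le_pow_nnnorm_pow_one_div 𝕜 a k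
  rw [ha, nnnorm_one, ENNReal.coe_one, ENNReal.one_rpow, mul_one, one_div,
    ENNReal.le_rpow_inv_iff (by positivity)] at gelfand
  exact_mod_cast gelfand

theorem ContinuousLinearMap.norm_map_of_pow_eq_one {𝕜 E : Type*} [NontriviallyNormedField 𝕜]
    [SeminormedAddCommGroup E] [NormedSpace 𝕜 E] {S : E →L[𝕜] E} (hS : ‖S‖ ≤ 1) {n : ℕ}
    (hpow : S ^ n = 1) (hn : n ≠ 0) (x : E) : ‖S x‖ = ‖x‖ := by
  obtain ⟨k, rfl⟩ := Nat.exists_eq_succ_of_ne_zero hn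
  have contraction {R : E →L[𝕜] E} (hR : ‖R‖ ≤ 1) (y : E) : ‖R y‖ ≤ ‖y‖ :=
    (R.le_opNorm y).trans (mul_le_of_le_one_left (norm_nonneg y) hR)
  have hSk : ‖S ^ k‖ ≤ 1 := by
    rcases k with _ | k
    · exact norm_id_le
    · exact (norm_pow_le' S k.succ_pos).trans (pow_le_one₀ (norm_nonneg S) hS)
  refine le_antisymm (contraction hS x) ?_
  calc ‖x‖ = ‖(S ^ k) (S x)‖ := by
        rw [← mul_apply_eq_comp, ← pow_succ, hpow, one_apply_eq_self]
    _ ≤ ‖S x‖ := contraction hSk _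

theorem ContinuousLinearMap.mem_unitary_of_norm_map_of_pow_eq_one {𝕜 E : Type*} [RCLike 𝕜]
    [NormedAddCommGroup E] [InnerProductSpace 𝕜 E] [CompleteSpace E] {S : E →L[𝕜] E}
    (hS : ∀ x, ‖S x‖ = ‖x‖) {n : ℕ} (hpow : S ^ n = 1) (hn : n ≠ 0) :
    S ∈ unitary (E →L[𝕜] E) :=
  (IsUnit.of_pow_eq_one hpow hn).mem_unitary_of_star_mul_self
    ((norm_map_iff_adjoint_comp_self S).mp hS)

theorem stmt_2 (T : H →L[ℂ] H)
    (hnl : spectralRadius ℂ T = ‖T‖₊)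
    (n : ℕ) (hn : 1 ≤ n) (lam : ℂ) (hpow : T ^ n = lam • (1 : H →L[ℂ] H)) :
    adjoint T * T = T * adjoint T ∧
      (T ≠ 0 → ∃ (μ : ℂ) (W : H →L[ℂ] H),
        μ ≠ 0 ∧ W ∈ unitary (H →L[ℂ] H) ∧ T = μ • W) := by
  nontriviality H
  have hn0 : n ≠ 0 := Nat.one_le_iff_ne_zero.mp hn
  have hnorm : ‖T‖₊ ^ n = ‖lam‖₊ := by
    rw [← nnnorm_pow_eq_pow_of_spectralRadius_eq hnl hn0, hpow, nnnorm_smul, nnnorm_one, mul_one]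
  have hunitary : T ≠ 0 → ∃ (μ : ℂ) (W : H →L[ℂ] H),
      μ ≠ 0 ∧ W ∈ unitary (H →L[ℂ] H) ∧ T = μ • W := by
    intro hT
    obtain ⟨μ, rfl⟩ := IsAlgClosed.exists_pow_nat_eq lam (Nat.pos_of_ne_zero hn0)
    have hμ : μ ≠ 0 := by
      rintro rfl
      simp [zero_pow hn0, hT] at hnorm
    have hTμ : ‖T‖₊ = ‖μ‖₊ := by
      rwa [nnnorm_pow, pow_left_inj₀ zero_le zero_le hn0] at hnorm
    have hWpow : (μ⁻¹ • T) ^ n = 1 := by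
      rw [smul_pow, hpow, smul_smul, inv_pow, inv_mul_cancel₀ (pow_ne_zero n hμ), one_smul]
    have hWnorm : ‖μ⁻¹ • T‖ ≤ 1 := by
      rw [norm_smul, norm_inv, ← coe_nnnorm T, hTμ, coe_nnnorm,
        inv_mul_cancel₀ (norm_ne_zero_iff.mpr hμ)]
    refine ⟨μ, μ⁻¹ • T, hμ, ?_, by rw [smul_smul, mul_inv_cancel₀ hμ, one_smul]⟩
    exact mem_unitary_of_norm_map_of_pow_eq_one (norm_map_of_pow_eq_one hWnorm hWpow hn0) hWpow hn0
  refine ⟨?_, hunitary⟩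
  rcases eq_or_ne T 0 with rfl | hT
  · simp
  obtain ⟨μ, W, -, hW, rfl⟩ := hunitary hT
  have := isStarNormal_of_mem_unitary hW
  exact (IsStarNormal.smul μ W).star_comm_self.eq
end

section
/- Let H be a complex Hilbert space and T a bounded linear operator on H satisfying TT* ≤ λ·T*T for some λ > 0. If T is binormal, i.e., T*T commutes with TT*, then T^n (T*)^n ≤ λ^{n²} (T*)^n T^n for every n ∈ ℕ, n ≥ 1. -/
/-!
Write `A = T*T` and `B = TT*`. As `A` and `B` commute, `B ≤ λA` gives `B^k ≤ λ^k A^k`.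
Conjugating this by `T` gives `T B^k T* ≤ λ^k T A^k T* = λ^k B^{k+1}`, so moving the factors
`T ⋯ T*` inwards one at a time yields `T^n T*^n ≤ λ^{C(n,2)} B^n`; conjugating by `T*` gives
`A^{k+1} = T* B^k T ≤ λ^k T* A^k T`, hence `A^n ≤ λ^{C(n,2)} T*^n T^n`. Chaining these with
`B^n ≤ λ^n A^n`, the exponents add up to `C(n,2) + n + C(n,2) = n²`.
-/

open ContinuousLinearMap

variable {H : Type*} [NormedAddCommGroup H] [InnerProductSpace ℂ H] [CompleteSpace H]

lemma mul_mul_pow_mul {M : Type*} [Monoid M] (x y : M) (k : ℕ) :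
    x * (y * x) ^ k * y = (x * y) ^ (k + 1) := by
  rw [← mul_pow_mul, mul_assoc, ← pow_succ]

lemma Nat.choose_two_add_add_choose_two (n : ℕ) : n.choose 2 + n + n.choose 2 = n ^ 2 := by
  induction n with
  | zero => rfl
  | succ n ih => rw [Nat.choose_succ_succ', Nat.choose_one_right]; linear_combination ih

namespace CStarAlgebra

variable {A : Type*} [CStarAlgebra A] [PartialOrder A] [StarOrderedRing A]

lemma pow_le_pow_of_commute {a b : A} (ha : 0 ≤ a) (hab : a ≤ b) (hc : Commute a b) (k : ℕ) :
    a ^ k ≤ b ^ k := by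
  induction k with
  | zero => simp
  | succ k ih =>
    have key : b ^ (k + 1) - a ^ (k + 1) = (b ^ k - a ^ k) * b + a ^ k * (b - a) := by
      simp only [sub_mul, mul_sub, ← pow_succ]; abel
    rw [← sub_nonneg, key]
    exact add_nonneg
      (Commute.mul_nonneg (sub_nonneg.2 ih) (ha.trans hab)
        (((Commute.refl b).pow_left k).sub_left (hc.pow_left k)))
      (Commute.mul_nonneg (pow_nonneg ha k) (sub_nonneg.2 hab)
        ((hc.pow_left k).sub_right ((Commute.refl a).pow_left k)))

section Binormal

variable {t : A} {c : ℝ} (hc : 0 ≤ c) (hle : t * star t ≤ c • (star t * t))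
  (hcomm : Commute (star t * t) (t * star t))
include hc hle hcomm

omit hc in
lemma mul_star_self_pow_le (k : ℕ) : (t * star t) ^ k ≤ c ^ k • (star t * t) ^ k := by
  rw [← smul_pow]
  exact pow_le_pow_of_commute (mul_star_self_nonneg t) hle (hcomm.symm.smul_right c) k

lemma conj_mul_star_self_pow_le (m k : ℕ) :
    t ^ m * (t * star t) ^ k * star t ^ m ≤
      c ^ (m * k + m.choose 2) • (t * star t) ^ (k + m) := by
  induction m generalizing k with
  | zero => simp
  | succ m ih =>
    have step : t * (t * star t) ^ k * star t ≤ c ^ k • (t * star t) ^ (k + 1) := by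
      have := star_right_conjugate_le_conjugate (mul_star_self_pow_le hle hcomm k) t
      rwa [mul_smul_comm, smul_mul_assoc, mul_mul_pow_mul] at this
    calc t ^ (m + 1) * (t * star t) ^ k * star t ^ (m + 1)
        = t ^ m * (t * (t * star t) ^ k * star t) * star (t ^ m) := by
          rw [pow_succ t m, pow_succ' (star t) m, star_pow]; simp only [mul_assoc]
      _ ≤ t ^ m * (c ^ k • (t * star t) ^ (k + 1)) * star (t ^ m) :=
          star_right_conjugate_le_conjugate step _
      _ = c ^ k • (t ^ m * (t * star t) ^ (k + 1) * star t ^ m) := by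
          rw [star_pow, mul_smul_comm, smul_mul_assoc]
      _ ≤ c ^ k • (c ^ (m * (k + 1) + m.choose 2) • (t * star t) ^ (k + 1 + m)) :=
          smul_le_smul_of_nonneg_left (ih (k + 1)) (_root_.pow_nonneg hc k)
      _ = c ^ ((m + 1) * k + (m + 1).choose 2) • (t * star t) ^ (k + (m + 1)) := by
          rw [smul_smul, ← pow_add, Nat.choose_succ_succ', Nat.choose_one_right]
          congr 2 <;> ring

lemma star_mul_self_pow_le_conj (m k : ℕ) :
    (star t * t) ^ (k + m) ≤
      c ^ (m * k + m.choose 2) • (star t ^ m * (star t * t) ^ k * t ^ m) := by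
  induction m generalizing k with
  | zero => simp
  | succ m ih =>
    have step : (star t * t) ^ (k + 1) ≤ c ^ k • (star t * (star t * t) ^ k * t) := by
      have := star_left_conjugate_le_conjugate (mul_star_self_pow_le hle hcomm k) t
      rwa [mul_smul_comm, smul_mul_assoc, mul_mul_pow_mul] at this
    calc (star t * t) ^ (k + (m + 1))
        = (star t * t) ^ (k + 1 + m) := by rw [add_right_comm, add_assoc]
      _ ≤ c ^ (m * (k + 1) + m.choose 2) •
            (star (t ^ m) * (star t * t) ^ (k + 1) * t ^ m) := by
          rw [star_pow]; exact ih (k + 1)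
      _ ≤ c ^ (m * (k + 1) + m.choose 2) •
            (star (t ^ m) * (c ^ k • (star t * (star t * t) ^ k * t)) * t ^ m) :=
          smul_le_smul_of_nonneg_left (star_left_conjugate_le_conjugate step _)
            (_root_.pow_nonneg hc _)
      _ = c ^ ((m + 1) * k + (m + 1).choose 2) •
            (star t ^ (m + 1) * (star t * t) ^ k * t ^ (m + 1)) := by
          rw [mul_smul_comm, smul_mul_assoc, smul_smul, ← pow_add, star_pow,
            pow_succ (star t) m, pow_succ' t m]
          congr 1
          · rw [Nat.choose_succ_succ', Nat.choose_one_right]; ring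
          · simp only [mul_assoc]

lemma pow_mul_star_pow_le (n : ℕ) :
    t ^ n * star t ^ n ≤ c ^ (n ^ 2) • (star t ^ n * t ^ n) := by
  have h₁ := conj_mul_star_self_pow_le hc hle hcomm n 0
  have h₂ := star_mul_self_pow_le_conj hc hle hcomm n 0
  simp only [pow_zero, mul_one, mul_zero, zero_add] at h₁ h₂
  calc t ^ n * star t ^ n ≤ c ^ n.choose 2 • (t * star t) ^ n := h₁
    _ ≤ c ^ n.choose 2 • c ^ n • (star t * t) ^ n :=
        smul_le_smul_of_nonneg_left (mul_star_self_pow_le hle hcomm n) (_root_.pow_nonneg hc _)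
    _ ≤ c ^ n.choose 2 • c ^ n • c ^ n.choose 2 • (star t ^ n * t ^ n) :=
        smul_le_smul_of_nonneg_left (smul_le_smul_of_nonneg_left h₂ (_root_.pow_nonneg hc _))
          (_root_.pow_nonneg hc _)
    _ = c ^ (n ^ 2) • (star t ^ n * t ^ n) := by
        rw [smul_smul, smul_smul, ← pow_add, ← pow_add, Nat.choose_two_add_add_choose_two]

end Binormal

end CStarAlgebra

theorem stmt_6_general (T : H →L[ℂ] H) (lam : ℝ) (hlam : 0 < lam)
    (hle : (lam • (adjoint T * T) - T * adjoint T).IsPositive)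
    (hbin : (adjoint T * T) * (T * adjoint T) = (T * adjoint T) * (adjoint T * T))
    (n : ℕ) :
    (lam ^ n ^ 2 • (adjoint T ^ n * T ^ n) - T ^ n * adjoint T ^ n).IsPositive := by
  simp only [← star_eq_adjoint, ← nonneg_iff_isPositive, sub_nonneg] at hle hbin ⊢
  exact CStarAlgebra.pow_mul_star_pow_le hlam.le hle hbin n

theorem stmt_6 (T : H →L[ℂ] H) (lam : ℝ) (hlam : 0 < lam)
    (hle : (lam • (adjoint T * T) - T * adjoint T).IsPositive)
    (hbin : (adjoint T * T) * (T * adjoint T) = (T * adjoint T) * (adjoint T * T))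
    (n : ℕ) (hn : 1 ≤ n) :
    (lam ^ n ^ 2 • (adjoint T ^ n * T ^ n) - T ^ n * adjoint T ^ n).IsPositive :=
  stmt_6_general T lam hlam hle hbin n
end

section
/- Let H be a complex Hilbert space and T a bounded linear operator on H that is hyponormal, i.e., TT* ≤ T*T. If T is binormal, i.e., T*T commutes with TT*, then T^n is hyponormal for every n ∈ ℕ, n ≥ 1. -/
open ContinuousLinearMap

variable {H : Type*} [NormedAddCommGroup H] [InnerProductSpace ℂ H] [CompleteSpace H]

/-
Put `a = T*T` and `b = TT*`. Binormality makes `a` and `b` commuting positive operators, and for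
those `b ≤ a` gives `bᵐ ≤ aᵐ`. Since `T* b = a T*`, conjugating by `T` turns these inequalities into
`aᵐ ≤ T*ᵐTᵐ` and `TᵐT*ᵐ ≤ bᵐ` by induction on `m`, and chaining gives `TᵐT*ᵐ ≤ bᵐ ≤ aᵐ ≤ T*ᵐTᵐ`.
-/

section StarOrderedRing

variable {A : Type*} [Ring A] [StarRing A] [PartialOrder A] [StarOrderedRing A]

def IsHyponormal (x : A) : Prop :=
  x * star x ≤ star x * x

def IsBinormal (x : A) : Prop :=
  Commute (star x * x) (x * star x)

variable {x : A}

lemma star_mul_self_pow_le_star_pow_mul_pow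
    (hle : ∀ m : ℕ, (x * star x) ^ m ≤ (star x * x) ^ m) (n : ℕ) :
    (star x * x) ^ n ≤ star x ^ n * x ^ n := by
  induction n with
  | zero => simp
  | succ m ih =>
    have hsemi : star x * (x * star x) ^ m = (star x * x) ^ m * star x :=
      (SemiconjBy.pow_right (mul_assoc (star x) x (star x)).symm m).eq
    calc (star x * x) ^ (m + 1) = star x * (x * star x) ^ m * x := by
          rw [hsemi, mul_assoc, pow_succ]
      _ ≤ star x * (star x ^ m * x ^ m) * x :=
          star_left_conjugate_le_conjugate ((hle m).trans ih) x
      _ = star x ^ (m + 1) * x ^ (m + 1) := by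
          rw [pow_succ', pow_succ]
          simp only [mul_assoc]

lemma pow_mul_star_pow_le_mul_star_self_pow
    (hle : ∀ m : ℕ, (x * star x) ^ m ≤ (star x * x) ^ m) (n : ℕ) :
    x ^ n * star x ^ n ≤ (x * star x) ^ n := by
  induction n with
  | zero => simp
  | succ m ih =>
    have hsemi : x * (star x * x) ^ m = (x * star x) ^ m * x :=
      (SemiconjBy.pow_right (mul_assoc x (star x) x).symm m).eq
    calc x ^ (m + 1) * star x ^ (m + 1) = x * (x ^ m * star x ^ m) * star x := by
          rw [pow_succ', pow_succ]
          simp only [mul_assoc]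
      _ ≤ x * (star x * x) ^ m * star x :=
          star_right_conjugate_le_conjugate (ih.trans (hle m)) x
      _ = (x * star x) ^ (m + 1) := by
          rw [hsemi, mul_assoc, pow_succ]

end StarOrderedRing

section CStarAlgebra

variable {A : Type*} [CStarAlgebra A] [PartialOrder A] [StarOrderedRing A]

lemma CStarAlgebra.pow_le_pow_left_of_commute {a b : A} (ha : 0 ≤ a) (hab : a ≤ b)
    (h : Commute a b) (n : ℕ) : a ^ n ≤ b ^ n := by
  induction n with
  | zero => simp
  | succ n ih =>
    have hb : 0 ≤ b := ha.trans hab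
    have hfirst : 0 ≤ b ^ n * (b - a) :=
      Commute.mul_nonneg (CStarAlgebra.pow_nonneg hb n) (sub_nonneg.2 hab)
        (((Commute.refl b).sub_right h.symm).pow_left n)
    have hsecond : 0 ≤ (b ^ n - a ^ n) * a :=
      Commute.mul_nonneg (sub_nonneg.2 ih) ha
        ((h.symm.pow_left n).sub_left ((Commute.refl a).pow_left n))
    have hsplit : b ^ (n + 1) - a ^ (n + 1) = b ^ n * (b - a) + (b ^ n - a ^ n) * a := by
      rw [mul_sub, sub_mul, pow_succ, pow_succ]
      abel
    rw [← sub_nonneg, hsplit]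
    exact add_nonneg hfirst hsecond

theorem IsHyponormal.pow {x : A} (hx : IsHyponormal x) (hbin : IsBinormal x) (n : ℕ) :
    IsHyponormal (x ^ n) := by
  have hle (m : ℕ) : (x * star x) ^ m ≤ (star x * x) ^ m :=
    CStarAlgebra.pow_le_pow_left_of_commute (mul_star_self_nonneg x) hx hbin.symm m
  rw [IsHyponormal, star_pow]
  exact (pow_mul_star_pow_le_mul_star_self_pow hle n).trans
    ((hle n).trans (star_mul_self_pow_le_star_pow_mul_pow hle n))

end CStarAlgebra

theorem stmt_8_general (T : H →L[ℂ] H)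
    (hhypo : (adjoint T * T - T * adjoint T).IsPositive)
    (hbin : (adjoint T * T) * (T * adjoint T) = (T * adjoint T) * (adjoint T * T))
    (n : ℕ) :
    (adjoint (T ^ n) * T ^ n - T ^ n * adjoint (T ^ n)).IsPositive := by
  simp only [← star_eq_adjoint] at hhypo hbin ⊢
  have hT : IsHyponormal T := (le_def _ _).2 hhypo
  exact (le_def _ _).1 (hT.pow hbin n)

theorem stmt_8 (T : H →L[ℂ] H)
    (hhypo : (adjoint T * T - T * adjoint T).IsPositive)
    (hbin : (adjoint T * T) * (T * adjoint T) = (T * adjoint T) * (adjoint T * T))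
    (n : ℕ) (hn : 1 ≤ n) :
    (adjoint (T ^ n) * T ^ n - T ^ n * adjoint (T ^ n)).IsPositive :=
  stmt_8_general T hhypo hbin n
end

section
/- Let H be a complex Hilbert space, p, r > 0, and let T be a bounded linear operator on H that is absolute-(p,r)-paranormal. If T² is a compact operator, then T is a compact operator. -/
open ContinuousLinearMap

variable {H : Type*} [NormedAddCommGroup H] [InnerProductSpace ℂ H] [CompleteSpace H]

/-!
With `a = T†T` and `b = TT†` we have `|T|^p |T†|^r = a^(p/2) b^(r/2)`. The product
`ab = T† T² T†` is compact, and every positive power `a^s` of a positive operator is a norm limit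
of operators `a y` with `y` commuting with `a` (approximate `x^s` uniformly by `x (x + ε)^(s-1)`
on the spectrum), so `a^(p/2) b^(r/2)` is compact. Paranormality says
`‖b^(r/2) z‖^(p+r) ≤ ‖a^(p/2) b^(r/2) z‖^r ‖z‖^p`, and such a domination by a compact operator
makes `b^(r/2)` compact, hence also `b = (b^(r/2))^(2/r)`. Finally `‖S z‖² ≤ ‖S†S z‖ ‖z‖` shows
that `S` is compact whenever `S†S` is: first for `S = T†`, then for `S = T`.
-/

open Filter Topology Metric

theorem totallyBounded_image_of_dist_lt {α β γ : Type*} [PseudoMetricSpace β]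
    [PseudoMetricSpace γ] {s : Set α} {f : α → β} {g : α → γ} (hg : TotallyBounded (g '' s))
    (h : ∀ ε > 0, ∃ δ > 0, ∀ x ∈ s, ∀ y ∈ s, dist (g x) (g y) < δ → dist (f x) (f y) < ε) :
    TotallyBounded (f '' s) := by
  rw [Metric.totallyBounded_iff]
  intro ε hε
  obtain ⟨δ, hδ, hfg⟩ := h ε hε
  obtain ⟨t, hts, htfin, hcover⟩ :=
    Set.exists_subset_image_finite_and.1 (finite_approx_of_totallyBounded hg δ hδ)
  refine ⟨f '' t, htfin.image f, ?_⟩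
  rintro _ ⟨x, hx, rfl⟩
  obtain ⟨_, ⟨y, hy, rfl⟩, hxy⟩ := Set.mem_iUnion₂.1 (hcover ⟨x, hx, rfl⟩)
  exact Set.mem_iUnion₂.2 ⟨f y, ⟨y, hy, rfl⟩, hfg x hx y (hts hy) hxy⟩

lemma exists_pos_rpow_mul_lt {r ε : ℝ} (hr : 0 < r) (hε : 0 < ε) (C : ℝ) (hC : 0 < C) :
    ∃ δ > 0, δ ^ r * C < ε := by
  refine ⟨(ε / (2 * C)) ^ r⁻¹, by positivity, ?_⟩
  rw [Real.rpow_inv_rpow (by positivity) hr.ne']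
  field_simp
  linarith

section NormedSpace

variable {𝕜 E F G : Type*}
  [NormedAddCommGroup E] [NormedAddCommGroup F] [NormedAddCommGroup G]

lemma norm_rpow_le_mul_norm_rpow_of_norm_eq_one [RCLike 𝕜] [NormedSpace 𝕜 E] [NormedSpace 𝕜 F]
    [NormedSpace 𝕜 G] {f : E →L[𝕜] F} {g : E →L[𝕜] G} {p r : ℝ}
    (hpr : p + r ≠ 0) (h : ∀ x, ‖x‖ = 1 → ‖f x‖ ^ (p + r) ≤ ‖g x‖ ^ r) (z : E) :
    ‖f z‖ ^ (p + r) ≤ ‖g z‖ ^ r * ‖z‖ ^ p := by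
  rcases eq_or_ne z 0 with rfl | hz
  · simp only [map_zero, norm_zero, Real.zero_rpow hpr]
    positivity
  have hz0 : 0 < ‖z‖ := norm_pos_iff.2 hz
  have hunit := h _ (norm_smul_inv_norm (𝕜 := 𝕜) hz)
  simp only [map_smul, norm_smul, norm_inv, RCLike.norm_ofReal, abs_norm] at hunit
  rw [Real.mul_rpow (by positivity) (norm_nonneg _), Real.mul_rpow (by positivity) (norm_nonneg _),
    Real.inv_rpow hz0.le, Real.inv_rpow hz0.le, Real.rpow_add hz0] at hunit
  have := Real.rpow_pos_of_pos hz0 p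
  have := Real.rpow_pos_of_pos hz0 r
  field_simp at hunit
  linarith

/-- On the unit ball the domination makes `g`-close points `f`-close, so `f` inherits total
boundedness of the image of the ball from `g`. -/
theorem IsCompactOperator.of_norm_rpow_le [NontriviallyNormedField 𝕜] [NormedSpace 𝕜 E]
    [NormedSpace 𝕜 F] [NormedSpace 𝕜 G] [CompleteSpace F] {f : E →L[𝕜] F} {g : E →L[𝕜] G}
    {p r : ℝ} (hp : 0 ≤ p) (hr : 0 < r) (hg : IsCompactOperator g)
    (h : ∀ z, ‖f z‖ ^ (p + r) ≤ ‖g z‖ ^ r * ‖z‖ ^ p) : IsCompactOperator f := by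
  have hpr : 0 < p + r := by linarith
  rw [← f.coe_coe, isCompactOperator_iff_isCompact_closure_image_closedBall _ one_pos]
  refine (totallyBounded_image_of_dist_lt (g := g) ?_ fun ε hε => ?_).closure.isCompact_of_isClosed
    isClosed_closure
  · obtain ⟨K, hK, hgK⟩ := hg.image_closedBall_subset_compact (𝕜₁ := 𝕜) (f := g.toLinearMap) 1
    exact hK.totallyBounded.subset hgK
  obtain ⟨δ, hδ, hδε⟩ := exists_pos_rpow_mul_lt hr (Real.rpow_pos_of_pos hε (p + r)) (2 ^ p)
    (by positivity)
  refine ⟨δ, hδ, fun x hx y hy hxy => ?_⟩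
  rw [dist_eq_norm, ← map_sub] at hxy ⊢
  have hxy2 : ‖x - y‖ ≤ 2 := by
    rw [mem_closedBall_zero_iff] at hx hy
    linarith [norm_sub_le x y]
  refine (Real.rpow_lt_rpow_iff (norm_nonneg _) hε.le hpr).1 ?_
  calc ‖f (x - y)‖ ^ (p + r) ≤ ‖g (x - y)‖ ^ r * ‖x - y‖ ^ p := h _
    _ ≤ ‖g (x - y)‖ ^ r * 2 ^ p := by gcongr
    _ < δ ^ r * 2 ^ p := by gcongr
    _ < ε ^ (p + r) := hδε

theorem IsCompactOperator.of_adjoint_comp_self [RCLike 𝕜] [InnerProductSpace 𝕜 E]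
    [CompleteSpace E] [InnerProductSpace 𝕜 F] [CompleteSpace F] {T : E →L[𝕜] F}
    (h : IsCompactOperator (adjoint T ∘L T)) : IsCompactOperator T := by
  refine h.of_norm_rpow_le zero_le_one one_pos fun z => ?_
  rw [one_add_one_eq_two, Real.rpow_two, Real.rpow_one, Real.rpow_one,
    apply_norm_sq_eq_inner_adjoint_left]
  exact (RCLike.re_le_norm _).trans (norm_inner_le_norm _ _)

end NormedSpace

lemma abs_mul_add_rpow_sub_rpow_le {s ε x : ℝ} (hs : 0 < s) (hs1 : s < 1) (hε : 0 < ε)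
    (hx : 0 ≤ x) : |x * (x + ε) ^ (s - 1) - x ^ s| ≤ ε ^ s := by
  have hs1' : s - 1 ≤ 0 := by linarith
  have hle : x * (x + ε) ^ (s - 1) ≤ x ^ s := by
    rcases hx.eq_or_lt with rfl | hx
    · simp [Real.zero_rpow hs.ne']
    · calc x * (x + ε) ^ (s - 1) ≤ x * x ^ (s - 1) :=
            mul_le_mul_of_nonneg_left (Real.rpow_le_rpow_of_nonpos hx (by linarith) hs1') hx.le
        _ = x ^ s := by rw [← Real.rpow_one_add' hx.le (by linarith)]; ring_nf
  have hge : x ^ s ≤ x * (x + ε) ^ (s - 1) + ε ^ s := by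
    have hε' : ε ^ s = ε * ε ^ (s - 1) := by
      rw [← Real.rpow_one_add' hε.le (by linarith)]; ring_nf
    calc x ^ s ≤ (x + ε) ^ s := Real.rpow_le_rpow hx (by linarith) hs.le
      _ = x * (x + ε) ^ (s - 1) + ε * (x + ε) ^ (s - 1) := by
        rw [← add_mul, ← Real.rpow_one_add' (by linarith) (by linarith)]; ring_nf
      _ ≤ x * (x + ε) ^ (s - 1) + ε ^ s := by
        rw [hε']
        exact add_le_add le_rfl (mul_le_mul_of_nonneg_left
          (Real.rpow_le_rpow_of_nonpos hε (le_add_of_nonneg_left hx) hs1') hε.le)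
  rw [abs_sub_comm, abs_of_nonneg (by linarith)]
  linarith

section CStarAlgebra

variable {A : Type*} [CStarAlgebra A]

lemma mul_cfc_eq_cfc_mul {a : A} {f : ℝ → ℝ} (hf : ContinuousOn f (spectrum ℝ a))
    (ha : IsSelfAdjoint a := by cfc_tac) : a * cfc f a = cfc (fun x => x * f x) a := by
  simpa only [cfc_id' ℝ a] using (cfc_mul (fun x => x) f a).symm

lemma mem_centralizer_cfc (f : ℝ → ℝ) (a : A) (ha : IsSelfAdjoint a := by cfc_tac) :
    cfc f a ∈ Set.centralizer {a} := by
  simpa [Set.mem_centralizer_iff, cfc_id' ℝ a] using (cfc_commute_cfc (fun x => x) f a).eq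

variable [PartialOrder A] [StarOrderedRing A]

lemma continuousOn_add_rpow_spectrum {a : A} (ha : 0 ≤ a) {ε : ℝ} (hε : 0 < ε) (t : ℝ) :
    ContinuousOn (fun x : ℝ => (x + ε) ^ t) (spectrum ℝ a) :=
  ContinuousOn.rpow_const (f := fun x => x + ε) (by fun_prop) fun x hx =>
    Or.inl (by have := spectrum_nonneg_of_nonneg ha hx; positivity)

/-- For `s < 1` the approximants are `a (a + ε)^(s-1)`: the shift keeps the negative exponent
away from the singularity at `0`. -/
lemma rpow_mem_closure_image_mul_centralizer {a : A} (ha : 0 ≤ a) {s : ℝ} (hs : 0 < s) :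
    a ^ s ∈ closure ((a * ·) '' Set.centralizer {a}) := by
  rw [CFC.rpow_eq_cfc_real ha]
  rcases le_or_gt 1 s with hs1 | hs1
  · refine subset_closure ⟨cfc (fun x : ℝ => x ^ (s - 1)) a, mem_centralizer_cfc _ a, ?_⟩
    show a * _ = _
    rw [mul_cfc_eq_cfc_mul (Real.continuous_rpow_const (by linarith)).continuousOn]
    refine cfc_congr fun x hx => ?_
    rw [← Real.rpow_one_add' (spectrum_nonneg_of_nonneg ha hx) (by linarith), add_sub_cancel]
  · set y : ℝ → A := fun ε => cfc (fun x : ℝ => (x + ε) ^ (s - 1)) a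
    have hdist : ∀ ε > 0, ‖a * y ε - cfc (fun x : ℝ => x ^ s) a‖ ≤ ε ^ s := fun ε hε => by
      have hcont := continuousOn_add_rpow_spectrum ha hε (s - 1)
      rw [mul_cfc_eq_cfc_mul hcont, ← cfc_sub (fun x : ℝ => x * (x + ε) ^ (s - 1))
        (fun x : ℝ => x ^ s) a ((continuousOn_id' _).mul hcont)
        (Real.continuous_rpow_const hs.le).continuousOn]
      exact norm_cfc_le (by positivity) fun x hx =>
        abs_mul_add_rpow_sub_rpow_le hs hs1 hε (spectrum_nonneg_of_nonneg ha hx)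
    have hlim : Tendsto (fun ε => a * y ε) (𝓝[>] 0) (𝓝 (cfc (fun x : ℝ => x ^ s) a)) := by
      rw [tendsto_iff_norm_sub_tendsto_zero]
      refine squeeze_zero' (Eventually.of_forall fun _ => norm_nonneg _)
        (eventually_mem_nhdsWithin.mono hdist) ?_
      simpa [Real.zero_rpow hs.ne'] using
        ((Real.continuousAt_rpow_const 0 s (Or.inr hs.le)).tendsto.mono_left nhdsWithin_le_nhds)
    exact mem_closure_of_tendsto hlim
      (Eventually.of_forall fun ε => ⟨y ε, mem_centralizer_cfc _ a, rfl⟩)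

end CStarAlgebra

section Operator

theorem IsCompactOperator.rpow_mul {a b : H →L[ℂ] H} (ha : 0 ≤ a) {s : ℝ} (hs : 0 < s)
    (hab : IsCompactOperator (a * b)) : IsCompactOperator (a ^ s * b) := by
  have hclosed : IsClosed {x : H →L[ℂ] H | IsCompactOperator (x * b)} :=
    isClosed_setOfPred_isCompactOperator.preimage (continuous_mul_const b)
  refine closure_minimal ?_ hclosed (rpow_mem_closure_image_mul_centralizer ha hs)
  rintro _ ⟨y, hy, rfl⟩
  have hay : a * y = y * a := Set.mem_centralizer_iff.1 hy a rfl
  show IsCompactOperator (a * y * b)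
  rw [hay, mul_assoc]
  exact hab.clm_comp y

theorem IsCompactOperator.mul_rpow {a c : H →L[ℂ] H} (ha : 0 ≤ a) {s : ℝ} (hs : 0 < s)
    (hca : IsCompactOperator (c * a)) : IsCompactOperator (c * a ^ s) := by
  have hclosed : IsClosed {x : H →L[ℂ] H | IsCompactOperator (c * x)} :=
    isClosed_setOfPred_isCompactOperator.preimage (continuous_const_mul c)
  refine closure_minimal ?_ hclosed (rpow_mem_closure_image_mul_centralizer ha hs)
  rintro _ ⟨y, -, rfl⟩
  show IsCompactOperator (c * (a * y))
  rw [← mul_assoc]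
  exact hca.comp_clm y

theorem IsCompactOperator.rpow {a : H →L[ℂ] H} (ha : 0 ≤ a) {s : ℝ} (hs : 0 < s)
    (h : IsCompactOperator a) : IsCompactOperator (a ^ s) := by
  simpa using h.mul_rpow ha hs (c := 1)

theorem IsCompactOperator.of_rpow {a : H →L[ℂ] H} (ha : 0 ≤ a) {s : ℝ} (hs : 0 < s)
    (h : IsCompactOperator (a ^ s)) : IsCompactOperator a := by
  have := h.rpow (CFC.rpow_nonneg (a := a) (y := s)) (inv_pos.2 hs)
  rwa [CFC.rpow_rpow_of_exponent_nonneg _ _ _ hs.le (inv_nonneg.2 hs.le) ha,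
    mul_inv_cancel₀ hs.ne', CFC.rpow_one _ ha] at this

lemma opPow_eq_rpow {A : H →L[ℂ] H} (hA : 0 ≤ A) (s : ℝ) : opPow A s = A ^ s :=
  (CFC.rpow_eq_cfc_real hA).symm

lemma adjoint_mul_self_nonneg (T : H →L[ℂ] H) : 0 ≤ adjoint T * T :=
  nonneg_iff_isPositive _ |>.2 (isPositive_adjoint_comp_self T)

lemma opAbs_eq_sqrt (T : H →L[ℂ] H) : opAbs T = CFC.sqrt (adjoint T * T) := by
  rw [CFC.sqrt_eq_real_sqrt _ (adjoint_mul_self_nonneg T), cfcₙ_eq_cfc]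
  rfl

lemma opPow_opAbs (T : H →L[ℂ] H) {s : ℝ} (hs : 0 ≤ s) :
    opPow (opAbs T) s = (adjoint T * T) ^ (s / 2) := by
  rw [opAbs_eq_sqrt, opPow_eq_rpow (CFC.sqrt_nonneg (adjoint T * T)), CFC.sqrt_eq_rpow,
    CFC.rpow_rpow_of_exponent_nonneg _ _ _ (by norm_num) hs (adjoint_mul_self_nonneg T),
    one_div_mul_eq_div]

end Operator

theorem stmt_11 (p r : ℝ) (hp : 0 < p) (hr : 0 < r) (T : H →L[ℂ] H)
    (hT : AbsPRParanormal p r T)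
    (hcpt : IsCompactOperator ⇑(T ^ 2)) :
    IsCompactOperator ⇑T := by
  have ha := adjoint_mul_self_nonneg T
  have hb : 0 ≤ T * adjoint T := by simpa using adjoint_mul_self_nonneg (adjoint T)
  have hP : opPow (opAbs T) p = (adjoint T * T) ^ (p / 2) := opPow_opAbs T hp.le
  have hR : opPow (opAbs (adjoint T)) r = (T * adjoint T) ^ (r / 2) := by
    simpa using opPow_opAbs (adjoint T) hr.le
  have hab : IsCompactOperator (adjoint T * T * (T * adjoint T)) := by
    rw [show adjoint T * T * (T * adjoint T) = adjoint T * T ^ 2 * adjoint T by noncomm_ring]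
    exact (hcpt.comp_clm (adjoint T)).clm_comp (adjoint T)
  have hPR : IsCompactOperator ((adjoint T * T) ^ (p / 2) * (T * adjoint T) ^ (r / 2)) :=
    (hab.rpow_mul ha (by positivity)).mul_rpow hb (by positivity)
  have hRc : IsCompactOperator ((T * adjoint T) ^ (r / 2)) :=
    hPR.of_norm_rpow_le hp.le hr <| norm_rpow_le_mul_norm_rpow_of_norm_eq_one (by positivity)
      fun x hx => by simpa [hP, hR] using hT x hx
  have hbc : IsCompactOperator (T * adjoint T) := hRc.of_rpow hb (by positivity)
  have hT' : IsCompactOperator (adjoint T) :=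
    .of_adjoint_comp_self (by rw [adjoint_adjoint]; exact hbc)
  exact .of_adjoint_comp_self (hT'.comp_clm T)
end

section
/- Let H be a complex Hilbert space and V a bounded linear operator on H that is a partial isometry. Then V is quasinormal (V(V*V) = (V*V)V) if and only if there exist p, r > 0 such that V is absolute-(p,r)-paranormal. -/
open ContinuousLinearMap

variable {H : Type*} [NormedAddCommGroup H] [InnerProductSpace ℂ H] [CompleteSpace H]

/-!
For a partial isometry `V` the operators `P = V*V` and `Q = VV*` are orthogonal projections, so
`|V| = P`, `|V*| = Q` and every positive power of them is the projection itself. Since `VP = V`,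
quasinormality `PV = VP` says `PV = V`, i.e. `Q ≤ P`. Absolute-`(p,r)`-paranormality says
`‖Qx‖^(p+r) ≤ ‖PQx‖^r` for unit vectors `x`: it holds if `PQ = Q` because `‖Qx‖ ≤ 1`, and for a
unit vector `u` in the range of `Q` it forces `‖Pu‖ = 1`, hence `Pu = u`.
-/

def IsPartialIsometry {R : Type*} [Mul R] [Star R] (v : R) : Prop :=
  v * star v * v = v

namespace IsPartialIsometry

variable {R : Type*} [Semigroup R] [StarMul R] {v : R}

lemma isStarProjection_star_mul_self (hv : IsPartialIsometry v) :
    IsStarProjection (star v * v) where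
  isIdempotentElem := by rw [IsIdempotentElem, mul_assoc, ← mul_assoc v, hv]
  isSelfAdjoint := .star_mul_self v

lemma isStarProjection_mul_star_self (hv : IsPartialIsometry v) :
    IsStarProjection (v * star v) where
  isIdempotentElem := by rw [IsIdempotentElem, ← mul_assoc, hv]
  isSelfAdjoint := .mul_star_self v

lemma commute_star_mul_self_iff (hv : IsPartialIsometry v) :
    Commute v (star v * v) ↔ star v * v * (v * star v) = v * star v := by
  have hvP : v * (star v * v) = v := by rw [← mul_assoc, hv]
  rw [Commute, SemiconjBy, hvP]
  constructor
  · intro h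
    rw [← mul_assoc, ← h]
  · intro h
    calc v = v * star v * v := hv.symm
      _ = star v * v * (v * star v) * v := by rw [h]
      _ = star v * v * v := by rw [mul_assoc _ (v * star v), hv]

end IsPartialIsometry

lemma IsStarProjection.cfc_eq_self {A : Type*} [Ring A] [StarRing A] [Algebra ℝ A]
    [TopologicalSpace A] [ContinuousFunctionalCalculus ℝ A IsSelfAdjoint] {p : A}
    (hp : IsStarProjection p) {f : ℝ → ℝ} (hf0 : f 0 = 0) (hf1 : f 1 = 1) : cfc f p = p := by
  have hspec := hp.isIdempotentElem.spectrum_subset ℝ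
  calc cfc f p = cfc (id : ℝ → ℝ) p := cfc_congr fun x hx => by
        rcases hspec hx with rfl | rfl <;> simp [hf0, hf1]
    _ = p := cfc_id ℝ p hp.isSelfAdjoint

section StarProjection

variable {𝕜 E : Type*} [RCLike 𝕜] [NormedAddCommGroup E] [InnerProductSpace 𝕜 E]
  [CompleteSpace E] {P Q : E →L[𝕜] E}

lemma IsStarProjection.norm_apply_le (hP : IsStarProjection P) (x : E) : ‖P x‖ ≤ ‖x‖ := by
  obtain ⟨K, _, rfl⟩ := isStarProjection_iff_eq_starProjection.mp hP
  exact K.norm_starProjection_apply_le x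

lemma IsStarProjection.apply_eq_self_of_norm_eq (hP : IsStarProjection P) {x : E}
    (h : ‖P x‖ = ‖x‖) : P x = x := by
  obtain ⟨K, _, rfl⟩ := isStarProjection_iff_eq_starProjection.mp hP
  exact K.starProjection_eq_self_iff.mpr ((K.mem_iff_norm_starProjection x).mpr h)

lemma IsStarProjection.apply_eq_self_of_one_le_norm_apply (hP : IsStarProjection P) {u : E}
    (hu : ‖u‖ = 1) {r : ℝ} (hr : 0 < r) (h : 1 ≤ ‖P u‖ ^ r) : P u = u := by
  refine hP.apply_eq_self_of_norm_eq (le_antisymm (hP.norm_apply_le u) ?_)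
  by_contra! hlt
  rw [hu] at hlt
  exact (Real.rpow_lt_one (norm_nonneg _) hlt hr).not_ge h

lemma IsStarProjection.mul_eq_right_of_forall_norm_eq_one (hQ : IsStarProjection Q)
    (h : ∀ u : E, ‖u‖ = 1 → Q u = u → P u = u) : P * Q = Q := by
  ext y
  set z := Q y
  rcases eq_or_ne z 0 with hz | hz
  · simp [z, hz]
  have hzn : ‖z‖ ≠ 0 := norm_ne_zero_iff.mpr hz
  have hQz : Q z = z := by simp only [z, ← mul_apply_eq_comp, hQ.isIdempotentElem.eq]
  have hunit := h (((‖z‖⁻¹ : ℝ) : 𝕜) • z)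
    (by rw [norm_smul, RCLike.norm_ofReal, abs_inv, abs_norm, inv_mul_cancel₀ hzn])
    (by rw [map_smul, hQz])
  rw [map_smul] at hunit
  simpa [hzn] using hunit

lemma IsStarProjection.mul_eq_right_iff_norm_rpow_le (hP : IsStarProjection P)
    (hQ : IsStarProjection Q) {p r : ℝ} (hp : 0 ≤ p) (hr : 0 < r) :
    (∀ x : E, ‖x‖ = 1 → ‖Q x‖ ^ (p + r) ≤ ‖P (Q x)‖ ^ r) ↔ P * Q = Q := by
  constructor
  · intro h
    refine hQ.mul_eq_right_of_forall_norm_eq_one fun u hu hQu => ?_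
    exact hP.apply_eq_self_of_one_le_norm_apply hu hr (by simpa [hQu, hu] using h u hu)
  · intro h x hx
    rw [← mul_apply_eq_comp, h]
    exact Real.rpow_le_rpow_of_exponent_ge' (norm_nonneg _) (hx ▸ hQ.norm_apply_le x) hr.le
      (le_add_of_nonneg_left hp)

end StarProjection

lemma IsStarProjection.opPow_eq_self {A : H →L[ℂ] H} (hA : IsStarProjection A) {s : ℝ}
    (hs : 0 < s) : opPow A s = A :=
  hA.cfc_eq_self (Real.zero_rpow hs.ne') (Real.one_rpow s)

lemma IsPartialIsometry.absPRParanormal_iff {V : H →L[ℂ] H} (hV : IsPartialIsometry V)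
    {p r : ℝ} (hp : 0 < p) (hr : 0 < r) :
    AbsPRParanormal p r V ↔ star V * V * (V * star V) = V * star V := by
  have hP := hV.isStarProjection_star_mul_self
  have hQ := hV.isStarProjection_mul_star_self
  have habs : opAbs V = star V * V := hP.cfc_eq_self Real.sqrt_zero Real.sqrt_one
  have habs' : opAbs (adjoint V) = V * star V := by
    rw [opAbs, adjoint_adjoint, ← star_eq_adjoint]
    exact hQ.cfc_eq_self Real.sqrt_zero Real.sqrt_one
  rw [AbsPRParanormal, habs, habs', hP.opPow_eq_self hp, hQ.opPow_eq_self hr]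
  exact hP.mul_eq_right_iff_norm_rpow_le hQ hp.le hr

theorem stmt_14 (V : H →L[ℂ] H) (hV : V * adjoint V * V = V) :
    V * (adjoint V * V) = (adjoint V * V) * V ↔
      ∃ p r : ℝ, 0 < p ∧ 0 < r ∧ AbsPRParanormal p r V := by
  have hV' : IsPartialIsometry V := by rwa [IsPartialIsometry, star_eq_adjoint]
  simp only [← star_eq_adjoint]
  change Commute V (star V * V) ↔ _
  rw [hV'.commute_star_mul_self_iff]
  constructor
  · intro h
    exact ⟨1, 1, one_pos, one_pos, (hV'.absPRParanormal_iff one_pos one_pos).mpr h⟩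
  · rintro ⟨p, r, hp, hr, h⟩
    exact (hV'.absPRParanormal_iff hp hr).mp h
end

section
/- Let H be a complex Hilbert space and V a bounded linear operator on H that is a partial isometry. Then V is quasinormal (V(V*V) = (V*V)V) if and only if (V*)²V² ≥ V*V, i.e., (V*)²V² − V*V is a positive operator. -/
/-!
Write `P = V⋆V` for the initial projection of the partial isometry `V`, so that `VP = V`;
hence `V` is quasinormal exactly when `PV = V`. The defect `W = V - PV` satisfies
`W⋆W = V⋆V - V⋆²V²`, so `V⋆²V² - V⋆V = -W⋆W` is positive only if `W⋆W = 0`,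
i.e. `W = 0`. Only the C⋆-identity and the order of a C⋆-algebra are needed.
-/

open ContinuousLinearMap

variable {H : Type*} [NormedAddCommGroup H] [InnerProductSpace ℂ H] [CompleteSpace H]

section StarRing

variable {R : Type*} [Ring R] [StarRing R] {v : R}

lemma commute_star_mul_self_iff_of_mul_star_mul_self (hv : v * star v * v = v) :
    Commute v (star v * v) ↔ star v * v * v = v := by
  rw [Commute, SemiconjBy, ← mul_assoc, hv, eq_comm]

lemma star_sq_mul_sq_sub_star_mul_self_of_mul_star_mul_self (hv : v * star v * v = v) :
    star v ^ 2 * v ^ 2 - star v * v =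
      -(star (v - star v * v * v) * (v - star v * v * v)) := by
  calc star v ^ 2 * v ^ 2 - star v * v
      = -(star v * v - 2 * (star v * star v * v * v)
          + star v * star v * ((v * star v * v) * v)) := by
        rw [hv]; noncomm_ring
    _ = -(star (v - star v * v * v) * (v - star v * v * v)) := by
        simp only [star_sub, star_mul, star_star]; noncomm_ring

end StarRing

section CStarRing

variable {A : Type*} [NormedRing A] [StarRing A] [CStarRing A] [PartialOrder A]
  [StarOrderedRing A] {v : A}

lemma star_sq_mul_sq_sub_star_mul_self_nonneg_iff (hv : v * star v * v = v) :
    0 ≤ star v ^ 2 * v ^ 2 - star v * v ↔ star v * v * v = v := by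
  rw [star_sq_mul_sq_sub_star_mul_self_of_mul_star_mul_self hv, neg_nonneg]
  constructor
  · intro h
    have hzero := le_antisymm h (star_mul_self_nonneg _)
    rw [CStarRing.star_mul_self_eq_zero_iff, sub_eq_zero] at hzero
    exact hzero.symm
  · intro h
    rw [h, sub_self, star_zero, zero_mul]

end CStarRing

theorem stmt_16 (V : H →L[ℂ] H) (hV : V * adjoint V * V = V) :
    V * (adjoint V * V) = (adjoint V * V) * V ↔
      (adjoint V ^ 2 * V ^ 2 - adjoint V * V).IsPositive := by
  rw [← star_eq_adjoint] at hV ⊢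
  rw [← nonneg_iff_isPositive, star_sq_mul_sq_sub_star_mul_self_nonneg_iff hV]
  exact commute_star_mul_self_iff_of_mul_star_mul_self hV
end
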